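/- arXiv:2410.14349 — 2 statements merged into one kernel-verified Lean document; each statement's English description precedes it below -/
import Mathlib

section
/- Let θ, φ, α, β be real with cos(2θ) = tan α, cos(2φ) = tan β, r² = cos(2θ), u² = cos(2φ), and 1 + r²u² ≠ 0, cos(α−β) ≠ 0. Then 4r²(1−u⁴)/(1+r²u²)² = 2 sin(2α) cos(2β) sec²(α−β). -/
theorem coefficient_B_squared (θ φ α β r u : ℝ)
    (hθ : Real.cos (2 * θ) = Real.tan α) (hφ : Real.cos (2 * φ) = Real.tan β)
    (hr : r^2 = Real.cos (2 * θ)) (hu : u^2 = Real.cos (2 * φ))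
    (hden : 1 + r^2 * u^2 ≠ 0) (hcos : Real.cos (α - β) ≠ 0)
    (hα : Real.cos α ≠ 0) (hβ : Real.cos β ≠ 0) :
    4 * r^2 * (1 - u^4) / (1 + r^2 * u^2)^2 =
      2 * Real.sin (2 * α) * Real.cos (2 * β) * (1 / Real.cos (α - β))^2 := by
  rw [hθ] at hr; rw [hφ] at hu
  have h4 : u^4 = Real.tan β ^ 2 := by rw [show u^4 = (u^2)^2 by ring, hu]
  rw [hr, hu, h4, Real.sin_two_mul, Real.cos_two_mul' β, Real.tan_eq_sin_div_cos,
    Real.tan_eq_sin_div_cos, Real.cos_sub]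
  rw [hr, hu, Real.tan_eq_sin_div_cos, Real.tan_eq_sin_div_cos] at hden
  have hd : Real.cos α * Real.cos β + Real.sin α * Real.sin β ≠ 0 := by
    rw [← Real.cos_sub]; exact hcos
  field_simp at hden ⊢
  ring_nf
end

section
/- cos(2π/17) = (−1 + √17 + √(34 − 2√17) + 2√(17 + 3√17 − √(34 − 2√17) − 2√(34 + 2√17)))/16. -/
open Real

noncomputable def gc (x : ℝ) : ℝ := Real.cos (x * (2 * Real.pi / 17))

lemma keyident (x y : ℝ) : Real.cos x * Real.cos y = (Real.cos (x + y) + Real.cos (x - y))/2 := by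
  rw [Real.cos_add, Real.cos_sub]; ring

lemma per (x : ℝ) : Real.cos (2*Real.pi - x) = Real.cos x := by
  rw [Real.cos_sub]; simp

lemma sqeq {x y : ℝ} (hx : 0 ≤ x) (hy : 0 ≤ y) (h : x^2 = y^2) : x = y := by
  have h1 : (x - y) * (x + y) = 0 := by linear_combination h
  rcases mul_eq_zero.mp h1 with h2 | h2
  · linarith
  · have : x = 0 := by linarith
    have : y = 0 := by linarith
    linarith

lemma gc_zero : gc 0 = 1 := by simp [gc]

lemma red9 : gc 9 = gc 8 := by
  unfold gc
  rw [show (9:ℝ)*(2*Real.pi/17) = 2*Real.pi - (8:ℝ)*(2*Real.pi/17) by ring, per]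

lemma red10 : gc 10 = gc 7 := by
  unfold gc
  rw [show (10:ℝ)*(2*Real.pi/17) = 2*Real.pi - (7:ℝ)*(2*Real.pi/17) by ring, per]

lemma red11 : gc 11 = gc 6 := by
  unfold gc
  rw [show (11:ℝ)*(2*Real.pi/17) = 2*Real.pi - (6:ℝ)*(2*Real.pi/17) by ring, per]

lemma red12 : gc 12 = gc 5 := by
  unfold gc
  rw [show (12:ℝ)*(2*Real.pi/17) = 2*Real.pi - (5:ℝ)*(2*Real.pi/17) by ring, per]

lemma red13 : gc 13 = gc 4 := by
  unfold gc
  rw [show (13:ℝ)*(2*Real.pi/17) = 2*Real.pi - (4:ℝ)*(2*Real.pi/17) by ring, per]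

lemma red14 : gc 14 = gc 3 := by
  unfold gc
  rw [show (14:ℝ)*(2*Real.pi/17) = 2*Real.pi - (3:ℝ)*(2*Real.pi/17) by ring, per]

lemma red15 : gc 15 = gc 2 := by
  unfold gc
  rw [show (15:ℝ)*(2*Real.pi/17) = 2*Real.pi - (2:ℝ)*(2*Real.pi/17) by ring, per]

lemma red16 : gc 16 = gc 1 := by
  unfold gc
  rw [show (16:ℝ)*(2*Real.pi/17) = 2*Real.pi - (1:ℝ)*(2*Real.pi/17) by ring, per]

lemma p31 : gc 3 * gc 1 = (gc 4 + gc 2)/2 := by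
  unfold gc; rw [keyident]; ring_nf

lemma p51 : gc 5 * gc 1 = (gc 6 + gc 4)/2 := by
  unfold gc; rw [keyident]; ring_nf

lemma p61 : gc 6 * gc 1 = (gc 7 + gc 5)/2 := by
  unfold gc; rw [keyident]; ring_nf

lemma p71 : gc 7 * gc 1 = (gc 8 + gc 6)/2 := by
  unfold gc; rw [keyident]; ring_nf

lemma p32 : gc 3 * gc 2 = (gc 5 + gc 1)/2 := by
  unfold gc; rw [keyident]; ring_nf

lemma p52 : gc 5 * gc 2 = (gc 7 + gc 3)/2 := by
  unfold gc; rw [keyident]; ring_nf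

lemma p62 : gc 6 * gc 2 = (gc 8 + gc 4)/2 := by
  unfold gc; rw [keyident]; ring_nf

lemma p72 : gc 7 * gc 2 = (gc 8 + gc 5)/2 := by
  unfold gc
  rw [keyident, show (7:ℝ)*(2*Real.pi/17) + (2:ℝ)*(2*Real.pi/17) = 2*Real.pi - (8:ℝ)*(2*Real.pi/17) by ring, per]
  ring_nf

lemma p43 : gc 4 * gc 3 = (gc 7 + gc 1)/2 := by
  unfold gc; rw [keyident]; ring_nf

lemma p54 : gc 5 * gc 4 = (gc 8 + gc 1)/2 := by
  unfold gc
  rw [keyident, show (5:ℝ)*(2*Real.pi/17) + (4:ℝ)*(2*Real.pi/17) = 2*Real.pi - (8:ℝ)*(2*Real.pi/17) by ring, per]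
  ring_nf

lemma p64 : gc 6 * gc 4 = (gc 7 + gc 2)/2 := by
  unfold gc
  rw [keyident, show (6:ℝ)*(2*Real.pi/17) + (4:ℝ)*(2*Real.pi/17) = 2*Real.pi - (7:ℝ)*(2*Real.pi/17) by ring, per]
  ring_nf

lemma p74 : gc 7 * gc 4 = (gc 6 + gc 3)/2 := by
  unfold gc
  rw [keyident, show (7:ℝ)*(2*Real.pi/17) + (4:ℝ)*(2*Real.pi/17) = 2*Real.pi - (6:ℝ)*(2*Real.pi/17) by ring, per]
  ring_nf

lemma p83 : gc 8 * gc 3 = (gc 6 + gc 5)/2 := by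
  unfold gc
  rw [keyident, show (8:ℝ)*(2*Real.pi/17) + (3:ℝ)*(2*Real.pi/17) = 2*Real.pi - (6:ℝ)*(2*Real.pi/17) by ring, per]
  ring_nf

lemma p85 : gc 8 * gc 5 = (gc 4 + gc 3)/2 := by
  unfold gc
  rw [keyident, show (8:ℝ)*(2*Real.pi/17) + (5:ℝ)*(2*Real.pi/17) = 2*Real.pi - (4:ℝ)*(2*Real.pi/17) by ring, per]
  ring_nf

lemma p86 : gc 8 * gc 6 = (gc 3 + gc 2)/2 := by
  unfold gc
  rw [keyident, show (8:ℝ)*(2*Real.pi/17) + (6:ℝ)*(2*Real.pi/17) = 2*Real.pi - (3:ℝ)*(2*Real.pi/17) by ring, per]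
  ring_nf

lemma p87 : gc 8 * gc 7 = (gc 2 + gc 1)/2 := by
  unfold gc
  rw [keyident, show (8:ℝ)*(2*Real.pi/17) + (7:ℝ)*(2*Real.pi/17) = 2*Real.pi - (2:ℝ)*(2*Real.pi/17) by ring, per]
  ring_nf

lemma p21 : gc 2 * gc 1 = (gc 3 + gc 1)/2 := by
  unfold gc; rw [keyident]; ring_nf

lemma p81 : gc 8 * gc 1 = (gc 8 + gc 7)/2 := by
  unfold gc
  rw [keyident, show (8:ℝ)*(2*Real.pi/17) + (1:ℝ)*(2*Real.pi/17) = 2*Real.pi - (8:ℝ)*(2*Real.pi/17) by ring, per]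
  ring_nf

lemma p42 : gc 4 * gc 2 = (gc 6 + gc 2)/2 := by
  unfold gc; rw [keyident]; ring_nf

lemma p84 : gc 8 * gc 4 = (gc 5 + gc 4)/2 := by
  unfold gc
  rw [keyident, show (8:ℝ)*(2*Real.pi/17) + (4:ℝ)*(2*Real.pi/17) = 2*Real.pi - (5:ℝ)*(2*Real.pi/17) by ring, per]
  ring_nf

lemma p63 : gc 6 * gc 3 = (gc 8 + gc 3)/2 := by
  unfold gc
  rw [keyident, show (6:ℝ)*(2*Real.pi/17) + (3:ℝ)*(2*Real.pi/17) = 2*Real.pi - (8:ℝ)*(2*Real.pi/17) by ring, per]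
  ring_nf

lemma p73 : gc 7 * gc 3 = (gc 7 + gc 4)/2 := by
  unfold gc
  rw [keyident, show (7:ℝ)*(2*Real.pi/17) + (3:ℝ)*(2*Real.pi/17) = 2*Real.pi - (7:ℝ)*(2*Real.pi/17) by ring, per]
  ring_nf

lemma p65 : gc 6 * gc 5 = (gc 6 + gc 1)/2 := by
  unfold gc
  rw [keyident, show (6:ℝ)*(2*Real.pi/17) + (5:ℝ)*(2*Real.pi/17) = 2*Real.pi - (6:ℝ)*(2*Real.pi/17) by ring, per]
  ring_nf

lemma p75 : gc 7 * gc 5 = (gc 5 + gc 2)/2 := by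
  unfold gc
  rw [keyident, show (7:ℝ)*(2*Real.pi/17) + (5:ℝ)*(2*Real.pi/17) = 2*Real.pi - (5:ℝ)*(2*Real.pi/17) by ring, per]
  ring_nf

lemma p41 : gc 4 * gc 1 = (gc 5 + gc 3)/2 := by
  unfold gc; rw [keyident]; ring_nf

lemma gc_sum : ∑ k ∈ Finset.range 17, gc (k : ℝ) = 0 := by
  set ζ := Complex.exp (((2 * Real.pi / 17 : ℝ) : ℂ) * Complex.I) with hζ
  have hζ17 : ζ ^ 17 = 1 := by
    rw [hζ, ← Complex.exp_nat_mul,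
      show ((17:ℕ):ℂ) * (((2 * Real.pi / 17 : ℝ):ℂ) * Complex.I) = 2 * (Real.pi:ℂ) * Complex.I by
        push_cast; ring]
    exact Complex.exp_two_pi_mul_I
  have hπ := Real.pi_pos
  have hne : ζ ≠ 1 := by
    intro h
    have h2 := congrArg Complex.im h
    rw [hζ, Complex.exp_ofReal_mul_I_im] at h2
    simp at h2
    have hs : 0 < Real.sin (2 * Real.pi / 17) :=
      Real.sin_pos_of_pos_of_lt_pi (by linarith) (by linarith)
    linarith [h2, hs]
  have hre : ∀ k : ℕ, (ζ ^ k).re = gc (k : ℝ) := by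
    intro k
    rw [hζ, ← Complex.exp_nat_mul,
      show ((k:ℕ):ℂ) * (((2 * Real.pi / 17 : ℝ):ℂ) * Complex.I)
        = (((k:ℝ) * (2 * Real.pi / 17) : ℝ) : ℂ) * Complex.I by push_cast; ring,
      Complex.exp_ofReal_mul_I_re]
    rfl
  calc ∑ k ∈ Finset.range 17, gc (k : ℝ)
      = ∑ k ∈ Finset.range 17, (ζ ^ k).re := Finset.sum_congr rfl (fun k _ => (hre k).symm)
    _ = (∑ k ∈ Finset.range 17, ζ ^ k).re := (Complex.re_sum _ _).symm
    _ = 0 := by rw [geom_sum_eq hne, hζ17]; simp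

lemma gc_sum8 : gc 1 + gc 2 + gc 3 + gc 4 + gc 5 + gc 6 + gc 7 + gc 8 = -1/2 := by
  have h := gc_sum
  simp only [Finset.sum_range_succ, Finset.sum_range_zero] at h
  norm_num at h
  rw [gc_zero, red9, red10, red11, red12, red13, red14, red15, red16] at h
  linarith

lemma hg1 : Real.sqrt 2 / 2 < gc 1 := by
  have hπ := Real.pi_pos
  have h := Real.cos_lt_cos_of_nonneg_of_le_pi (show (0:ℝ) ≤ 2*Real.pi/17 by positivity)
    (show Real.pi/4 ≤ Real.pi by linarith) (show 2*Real.pi/17 < Real.pi/4 by linarith)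
  rw [Real.cos_pi_div_four] at h
  unfold gc; rw [one_mul]; exact h

lemma hg2 : 1/2 < gc 2 := by
  have hπ := Real.pi_pos
  have h := Real.cos_lt_cos_of_nonneg_of_le_pi (show (0:ℝ) ≤ 2*(2*Real.pi/17) by positivity)
    (show Real.pi/3 ≤ Real.pi by linarith) (show 2*(2*Real.pi/17) < Real.pi/3 by linarith)
  rw [Real.cos_pi_div_three] at h
  exact h

lemma hg3 : 0 < gc 3 := by
  have hπ := Real.pi_pos
  exact Real.cos_pos_of_mem_Ioo ⟨by nlinarith, by nlinarith⟩

lemma hg4 : 0 < gc 4 := by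
  have hπ := Real.pi_pos
  exact Real.cos_pos_of_mem_Ioo ⟨by nlinarith, by nlinarith⟩

lemma hg8 : -1 ≤ gc 8 := Real.neg_one_le_cos _

lemma hg35 : 0 < gc 3 + gc 5 := by
  have hπ := Real.pi_pos
  have h5 : gc 5 = -Real.cos (7*Real.pi/17) := by
    unfold gc
    rw [show (5:ℝ)*(2*Real.pi/17) = Real.pi - 7*Real.pi/17 by ring, Real.cos_pi_sub]
  have h := Real.cos_lt_cos_of_nonneg_of_le_pi (show (0:ℝ) ≤ 3*(2*Real.pi/17) by positivity)
    (show 7*Real.pi/17 ≤ Real.pi by linarith) (show 3*(2*Real.pi/17) < 7*Real.pi/17 by linarith)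
  have h3 : Real.cos (7*Real.pi/17) < gc 3 := h
  rw [h5]; linarith

lemma hg14 : gc 4 < gc 1 := by
  have hπ := Real.pi_pos
  have h := Real.cos_lt_cos_of_nonneg_of_le_pi (show (0:ℝ) ≤ 1*(2*Real.pi/17) by positivity)
    (show 4*(2*Real.pi/17) ≤ Real.pi by linarith) (show 1*(2*Real.pi/17) < 4*(2*Real.pi/17) by linarith)
  exact h

lemma hsqrt2 : 1 ≤ Real.sqrt 2 := by
  nlinarith [Real.sq_sqrt (show (0:ℝ) ≤ 2 by norm_num), Real.sqrt_nonneg 2]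


lemma sq_le_bound {x c : ℝ} (hx : 0 ≤ x) (hc : 0 ≤ c) (h : x^2 ≤ c^2) : x ≤ c := by
  nlinarith

lemma sq_ge_bound {x c : ℝ} (hx : 0 ≤ x) (hc : 0 ≤ c) (h : c^2 ≤ x^2) : c ≤ x := by
  nlinarith

lemma quad_nonneg {x y : ℝ} (h : y^2 = x*y + 1) (hy : 0 < y) : 0 ≤ 4*y - 2*x := by
  nlinarith [sq_nonneg y]

set_option maxHeartbeats 1000000 in
theorem gauss_cos_two_pi_div_seventeen :
    Real.cos (2 * Real.pi / 17) =
      (-1 + Real.sqrt 17 + Real.sqrt (34 - 2 * Real.sqrt 17) +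
        2 * Real.sqrt (17 + 3 * Real.sqrt 17 - Real.sqrt (34 - 2 * Real.sqrt 17)
          - 2 * Real.sqrt (34 + 2 * Real.sqrt 17))) / 16 := by
  have hsum := gc_sum8
  -- quadratic relations among Gaussian periods
  have hx12 : (2*(gc 1 + gc 2 + gc 4 + gc 8)) * (2*(gc 3 + gc 5 + gc 6 + gc 7)) = -4 := by
    linear_combination 4*(p31 + p51 + p61 + p71 + p32 + p52 + p62 + p72 + p43 + p54 + p64
      + p74 + p83 + p85 + p86 + p87) + 8*hsum
  have hy12 : (2*(gc 1 + gc 4)) * (2*(gc 2 + gc 8)) = -1 := by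
    linear_combination 4*(p21 + p81 + p42 + p84) + 2*hsum
  have hz12 : (2*(gc 3 + gc 5)) * (2*(gc 6 + gc 7)) = -1 := by
    linear_combination 4*(p63 + p73 + p65 + p75) + 2*hsum
  have h14 : (2*gc 1) * (2*gc 4) = 2*(gc 3 + gc 5) := by
    linear_combination 4*p41
  set x1 := 2*(gc 1 + gc 2 + gc 4 + gc 8) with hx1d
  set x2 := 2*(gc 3 + gc 5 + gc 6 + gc 7) with hx2d
  set y1 := 2*(gc 1 + gc 4) with hy1d
  set y2 := 2*(gc 2 + gc 8) with hy2d
  set z1 := 2*(gc 3 + gc 5) with hz1d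
  set z2 := 2*(gc 6 + gc 7) with hz2d
  -- the nested radicals
  set a := Real.sqrt 17 with had
  have ha0 : 0 ≤ a := Real.sqrt_nonneg _
  have ha2 : a^2 = 17 := Real.sq_sqrt (by norm_num)
  have ha4 : 4 ≤ a := sq_ge_bound ha0 (by norm_num) (by rw [ha2]; norm_num)
  have ha5 : a ≤ 5 := sq_le_bound ha0 (by norm_num) (by rw [ha2]; norm_num)
  set b := Real.sqrt (34 - 2*a) with hbd'
  have hb0 : 0 ≤ b := Real.sqrt_nonneg _
  have hb2 : b^2 = 34 - 2*a := Real.sq_sqrt (by linarith)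
  have hb6 : b ≤ 6 := sq_le_bound hb0 (by norm_num) (by rw [hb2]; linarith)
  set d := Real.sqrt (34 + 2*a) with hdd
  have hd0 : 0 ≤ d := Real.sqrt_nonneg _
  have hd2 : d^2 = 34 + 2*a := Real.sq_sqrt (by linarith)
  have hd7 : d ≤ 7 := sq_le_bound hd0 (by norm_num) (by rw [hd2]; linarith)
  set e := Real.sqrt (17 + 3*a - b - 2*d) with hed
  have he0 : 0 ≤ e := Real.sqrt_nonneg _
  have he2 : e^2 = 17 + 3*a - b - 2*d := Real.sq_sqrt (by linarith)
  clear_value x1 x2 y1 y2 z1 z2 a b d e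
  have hbd : b*(a+1) = 4*d := by
    apply sqeq (mul_nonneg hb0 (by linarith)) (by linarith)
    linear_combination ((a+1)^2)*hb2 - 16*hd2 + (30 - 2*a)*ha2
  -- x1
  have hx1pos : 0 < x1 := by
    rw [hx1d]; linarith [hg1, hg2, hg4, hg8, hsqrt2]
  have hsum2 : x1 + x2 = -1 := by rw [hx1d, hx2d]; linarith [hsum]
  have hx1 : 2*x1 + 1 = a := by
    apply sqeq (by linarith) ha0
    linear_combination (4*x1)*hsum2 - 4*hx12 - ha2
  have hx1' : x1 = (a - 1)/2 := by linarith
  have hx2' : x2 = (-1 - a)/2 := by linarith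
  -- y1
  have hy1pos : 0 < y1 := by rw [hy1d]; linarith [hg1, hg4, hsqrt2]
  have hy1sum : y1 + y2 = x1 := by rw [hy1d, hy2d, hx1d]; ring
  have hy1sq : y1^2 = x1*y1 + 1 := by linear_combination -hy12 + y1*hy1sum
  have hynn : 0 ≤ 4*y1 - 2*x1 := quad_nonneg hy1sq hy1pos
  have hy : 4*y1 - 2*x1 = b := by
    apply sqeq hynn hb0
    linear_combination 16*hy1sq + (4*x1 + 2*a - 2)*hx1' + ha2 - hb2
  have hy' : y1 = (a - 1 + b)/4 := by linarith
  -- z1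
  have hz1pos : 0 < z1 := by rw [hz1d]; linarith [hg35]
  have hzsum : z1 + z2 = x2 := by rw [hz1d, hz2d, hx2d]; ring
  have hz1sq : z1^2 = x2*z1 + 1 := by linear_combination -hz12 + z1*hzsum
  have hznn : 0 ≤ 4*z1 - 2*x2 := quad_nonneg hz1sq hz1pos
  have hzz : 4*z1 - 2*x2 = d := by
    apply sqeq hznn hd0
    linear_combination 16*hz1sq + (4*x2 - 2 - 2*a)*hx2' + ha2 - hd2
  have hz1' : z1 = (-1 - a + d)/4 := by linarith
  -- t1 = 2 gc 1
  have htsum : 2*gc 1 + 2*gc 4 = y1 := by rw [hy1d]; ring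
  have hA : (4*(2*gc 1) - 2*y1)^2 = 4*y1^2 - 16*z1 := by
    linear_combination (16*(2*gc 1))*htsum - 16*h14
  have hB : 4*y1^2 - 16*z1 = e^2 := by
    rw [hy', hz1']
    linear_combination (1/4)*ha2 + (1/4)*hb2 + (1/2)*hbd - he2
  have htnn : 0 ≤ 4*(2*gc 1) - 2*y1 := by
    rw [hy1d]; linarith [hg14]
  have ht : 4*(2*gc 1) - 2*y1 = e := by
    apply sqeq htnn he0
    rw [hA]; exact hB
  have hgc1 : Real.cos (2 * Real.pi / 17) = gc 1 := by unfold gc; rw [one_mul]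
  rw [hgc1]
  linarith [ht, hy']
end
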